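/- arXiv:1809.03246 — 2 statements merged into one kernel-verified Lean document; each statement's English description precedes it below -/
import Mathlib

section
/- Let P : ℝ^{d+1} → ℝ be a nonzero polynomial of degree at most D, and let ℓ ⊂ ℝ^{d+1} be a line not contained in the zero set Z(P). If O_i are the connected components of ℝ^{d+1} ∖ Z(P), then the line ℓ intersects at most D + 1 of the components O_i. -/
open MvPolynomial

lemma aux_natDegree_aeval_le {n : ℕ} (P : MvPolynomial (Fin n) ℝ)
    (φ : Fin n → Polynomial ℝ) (hφ : ∀ i, (φ i).natDegree ≤ 1) :
    (MvPolynomial.aeval φ P).natDegree ≤ P.totalDegree := by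
  conv_lhs => rw [P.as_sum]
  rw [map_sum]
  apply Polynomial.natDegree_sum_le_of_forall_le
  intro m hm
  rw [MvPolynomial.aeval_monomial]
  refine le_trans (Polynomial.natDegree_mul_le) ?_
  have h1 : (algebraMap ℝ (Polynomial ℝ) (MvPolynomial.coeff m P)).natDegree = 0 := by
    simp [Polynomial.algebraMap_eq]
  rw [h1, zero_add]
  refine le_trans ?_ (MvPolynomial.le_totalDegree hm)
  rw [Finsupp.prod, Finsupp.sum]
  refine le_trans (Polynomial.natDegree_prod_le _ _) ?_
  apply Finset.sum_le_sum
  intro i _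
  calc (φ i ^ m i).natDegree ≤ m i * (φ i).natDegree := Polynomial.natDegree_pow_le
    _ ≤ m i * 1 := Nat.mul_le_mul_left _ (hφ i)
    _ = m i := mul_one _

/-- A line not contained in the zero set of a nonzero polynomial of degree ≤ D
on ℝ^{d+1} meets at most D + 1 of the connected components of the complement of the zero set. -/
theorem statement_3 (d D : ℕ) (P : MvPolynomial (Fin (d + 1)) ℝ)
    (hP : P ≠ 0) (hdeg : P.totalDegree ≤ D)
    (p w : Fin (d + 1) → ℝ) (hw : w ≠ 0)
    (L : Set (Fin (d + 1) → ℝ)) (hL : L = {x | ∃ s : ℝ, x = p + s • w})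
    (Z : Set (Fin (d + 1) → ℝ)) (hZ : Z = {x | MvPolynomial.eval x P = 0})
    (hnotsub : ¬ L ⊆ Z) :
    {O : Set (Fin (d + 1) → ℝ) |
        (∃ x ∈ Zᶜ, O = connectedComponentIn Zᶜ x) ∧ (O ∩ L).Nonempty }.Finite ∧
    {O : Set (Fin (d + 1) → ℝ) |
        (∃ x ∈ Zᶜ, O = connectedComponentIn Zᶜ x) ∧ (O ∩ L).Nonempty }.ncard ≤ D + 1 := by
  classical
  set φ : Fin (d + 1) → Polynomial ℝ :=
    fun i => Polynomial.C (p i) + Polynomial.C (w i) * Polynomial.X with hφdef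
  set q : Polynomial ℝ := MvPolynomial.aeval φ P with hqdef
  set f : ℝ → (Fin (d + 1) → ℝ) := fun s => p + s • w with hfdef
  have hqeval : ∀ s : ℝ, q.eval s = MvPolynomial.eval (f s) P := by
    intro s
    have h := MvPolynomial.comp_aeval_apply (Polynomial.aeval s) (f := φ) P
    rw [hqdef, ← Polynomial.coe_aeval_eq_eval, h]
    have : (fun i => (Polynomial.aeval s) (φ i)) = fun i => (f s) i := by
      funext i
      simp only [hφdef, hfdef, Polynomial.aeval_add, Polynomial.aeval_mul,
        Polynomial.aeval_C, Polynomial.aeval_X, Algebra.algebraMap_self, RingHom.id_apply,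
        Pi.add_apply, Pi.smul_apply, smul_eq_mul]
      ring
    rw [this, ← MvPolynomial.coe_aeval_eq_eval]
    rfl
  -- q is nonzero
  obtain ⟨x0, hx0L, hx0Z⟩ := Set.not_subset.mp hnotsub
  rw [hL] at hx0L
  obtain ⟨s0, hs0⟩ := hx0L
  have hq0 : q ≠ 0 := by
    intro h
    apply hx0Z
    rw [hZ]
    have := hqeval s0
    rw [h] at this
    simpa [hfdef, ← hs0] using this.symm
  -- roots
  set T : Finset ℝ := q.roots.toFinset with hTdef
  have hTcard : T.card ≤ D := by
    calc T.card ≤ Multiset.card q.roots := Multiset.toFinset_card_le _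
      _ ≤ q.natDegree := Polynomial.card_roots' q
      _ ≤ P.totalDegree := aux_natDegree_aeval_le P φ (by
          intro i
          refine le_trans (Polynomial.natDegree_add_le _ _) ?_
          simp [Polynomial.natDegree_C]
          exact le_trans (Polynomial.natDegree_mul_le) (by simp))
      _ ≤ D := hdeg
  have hmemT : ∀ r : ℝ, q.eval r = 0 → r ∈ T := by
    intro r hr
    rw [hTdef, Multiset.mem_toFinset, Polynomial.mem_roots hq0]
    exact hr
  have hfc : Continuous f := by
    apply continuous_const.add
    exact continuous_id.smul continuous_const
  set S := {O : Set (Fin (d + 1) → ℝ) |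
      (∃ x ∈ Zᶜ, O = connectedComponentIn Zᶜ x) ∧ (O ∩ L).Nonempty} with hSdef
  -- choose a parameter on the line for each component
  have hsel : ∀ O ∈ S, ∃ s : ℝ, f s ∈ O := by
    intro O hO
    obtain ⟨-, z, hzO, hzL⟩ := hO
    rw [hL] at hzL
    obtain ⟨s, hs⟩ := hzL
    exact ⟨s, by show p + s • w ∈ O; rw [← hs]; exact hzO⟩
  choose! sel hselmem using hsel
  have hOeq : ∀ O ∈ S, ∀ y ∈ O, O = connectedComponentIn Zᶜ y := by
    intro O hO y hy
    obtain ⟨⟨x, hx, rfl⟩, -⟩ := hO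
    exact connectedComponentIn_eq hy
  have hOsub : ∀ O ∈ S, O ⊆ Zᶜ := by
    intro O hO
    obtain ⟨⟨x, hx, rfl⟩, -⟩ := hO
    exact connectedComponentIn_subset _ _
  have hqne : ∀ O ∈ S, q.eval (sel O) ≠ 0 := by
    intro O hO
    have hmem := hselmem O hO
    have := hOsub O hO hmem
    rw [hqeval]
    simpa [hZ] using this
  -- connectivity along root-free segments
  have key : ∀ s1 s2 : ℝ, s1 ≤ s2 → (∀ r ∈ Set.Icc s1 s2, q.eval r ≠ 0) →
      connectedComponentIn Zᶜ (f s1) = connectedComponentIn Zᶜ (f s2) := by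
    intro s1 s2 h12 hnr
    have hsub : f '' Set.Icc s1 s2 ⊆ Zᶜ := by
      rintro - ⟨r, hr, rfl⟩
      have := hnr r hr
      rw [hqeval] at this
      simpa [hZ] using this
    have hconn : IsPreconnected (f '' Set.Icc s1 s2) :=
      isPreconnected_Icc.image _ hfc.continuousOn
    have h1 : f s1 ∈ f '' Set.Icc s1 s2 := ⟨s1, ⟨le_refl _, h12⟩, rfl⟩
    have hss := hconn.subset_connectedComponentIn h1 hsub
    exact connectedComponentIn_eq (hss ⟨s2, ⟨h12, le_refl _⟩, rfl⟩)
  -- if segment endpoints lie in components, no root between forces equality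
  have key2 : ∀ O1 ∈ S, ∀ O2 ∈ S, sel O1 ≤ sel O2 →
      (∀ r ∈ Set.Icc (sel O1) (sel O2), q.eval r ≠ 0) → O1 = O2 := by
    intro O1 h1 O2 h2 hle hnr
    rw [hOeq O1 h1 _ (hselmem O1 h1), hOeq O2 h2 _ (hselmem O2 h2)]
    exact key _ _ hle hnr
  set g : Set (Fin (d + 1) → ℝ) → WithBot ℝ :=
    fun O => (T.filter (fun r => r < sel O)).max with hgdef
  set Tb : Finset (WithBot ℝ) := insert ⊥ (T.image ((↑) : ℝ → WithBot ℝ)) with hTbdef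
  have hmapsto : ∀ O ∈ S, g O ∈ Tb := by
    intro O hO
    rcases Finset.eq_empty_or_nonempty (T.filter (fun r => r < sel O)) with h | h
    · simp [hgdef, h, hTbdef]
    · obtain ⟨a, ha⟩ := Finset.max_of_nonempty h
      have haT : a ∈ T := (Finset.mem_filter.mp (Finset.mem_of_max ha)).1
      show (T.filter (fun r => r < sel O)).max ∈
        insert ⊥ (T.image ((↑) : ℝ → WithBot ℝ))
      rw [ha]
      exact Finset.mem_insert_of_mem (Finset.mem_image_of_mem _ haT)
  -- ordered version of injectivity
  have hinjle : ∀ O1 ∈ S, ∀ O2 ∈ S, sel O1 ≤ sel O2 → g O1 = g O2 → O1 = O2 := by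
    intro O1 h1 O2 h2 hle hg
    by_cases hroot : ∀ r ∈ Set.Icc (sel O1) (sel O2), q.eval r ≠ 0
    · exact key2 O1 h1 O2 h2 hle hroot
    · push_neg at hroot
      obtain ⟨r, hrI, hr0⟩ := hroot
      exfalso
      have hrT : r ∈ T := hmemT r hr0
      have hr1 : sel O1 < r :=
        lt_of_le_of_ne hrI.1 (fun h => hqne O1 h1 (h ▸ hr0))
      have hr2 : r < sel O2 :=
        lt_of_le_of_ne hrI.2 (fun h => hqne O2 h2 (h.symm ▸ hr0))
      have hrfil : r ∈ T.filter (fun r => r < sel O2) :=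
        Finset.mem_filter.mpr ⟨hrT, hr2⟩
      have hle2 : (r : WithBot ℝ) ≤ g O2 := Finset.le_max hrfil
      rw [← hg, hgdef] at hle2
      rcases Finset.eq_empty_or_nonempty (T.filter (fun x => x < sel O1)) with h | h
      · simp [h] at hle2
      · obtain ⟨a, ha⟩ := Finset.max_of_nonempty h
        have hle2' : (r : WithBot ℝ) ≤ (a : WithBot ℝ) := by rw [← ha]; exact hle2
        have haf : a < sel O1 := (Finset.mem_filter.mp (Finset.mem_of_max ha)).2
        have : r ≤ a := by exact_mod_cast hle2'
        linarith
  have hinj : Set.InjOn g S := by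
    intro O1 h1 O2 h2 hg
    rcases le_total (sel O1) (sel O2) with h | h
    · exact hinjle O1 h1 O2 h2 h hg
    · exact (hinjle O2 h2 O1 h1 h hg.symm).symm
  have hTbcard : Tb.card ≤ D + 1 := by
    calc Tb.card ≤ (T.image ((↑) : ℝ → WithBot ℝ)).card + 1 := Finset.card_insert_le _ _
      _ ≤ T.card + 1 := by
          exact Nat.add_le_add_right (Finset.card_image_le) 1
      _ ≤ D + 1 := Nat.add_le_add_right hTcard 1
  have hfin : S.Finite := by
    apply Set.Finite.of_finite_image _ hinj
    exact Set.Finite.subset Tb.finite_toSet (by rintro - ⟨O, hO, rfl⟩; exact hmapsto O hO)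
  refine ⟨hfin, ?_⟩
  calc S.ncard ≤ (Tb : Set (WithBot ℝ)).ncard :=
        Set.ncard_le_ncard_of_injOn g hmapsto hinj Tb.finite_toSet
    _ = Tb.card := Set.ncard_coe_finset _
    _ ≤ D + 1 := hTbcard
end

section
/- With notation as in the previous statement, suppose additionally |det-free bounds| ‖H‖_{op}, ‖H^{-1}‖_{op} ≤ C₁ and |v| ≤ C₁. Then |(Q_{x'}, Q_{t'})| ≥ c ρ^{-1} |(P_x, P_t)| for a constant c > 0 depending only on C₁ and d, and therefore Angle((−ψ(ξ'),1), tangent space of Z(Q)) ≤ C ρ^{-1} · [the corresponding angle quantity |(−∇φ(ξ),1)·(P_x,P_t)|/|(P_x,P_t)|]. -/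
open scoped RealInnerProductSpace

/-!
The rescaled polynomial is `Q = P ∘ T` for the linear map `T (x, t) = (ρ⁻¹ H x - ρ⁻² t v, ρ⁻² t)`,
so `Q' = P' ∘ T`. The inverse `(x', t') ↦ (ρ H⁻¹ (x' + t' v), ρ² t')` has norm at most
`ρ (C₁ + 1)²` because `ρ ≤ 1`, and `‖P'‖ ≤ ‖Q'‖ ‖T⁻¹‖` gives the first bound. Moreover `T` maps the
rescaled normal `(-ρ⁻¹ H⁻¹ (∇φ - v), 1)` to `ρ⁻² (-∇φ, 1)`, so the numerators of the two angle
quantities differ by exactly the factor `ρ⁻²`, while the denominators differ by at least `c ρ⁻¹`.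
-/

open ContinuousLinearMap

theorem ContinuousLinearMap.norm_le_norm_comp_mul_of_rightInverse {𝕜 E F G : Type*}
    [NontriviallyNormedField 𝕜] [NormedAddCommGroup E] [NormedSpace 𝕜 E]
    [NormedAddCommGroup F] [NormedSpace 𝕜 F] [NormedAddCommGroup G] [NormedSpace 𝕜 G]
    (L : F →L[𝕜] G) {T : E →L[𝕜] F} {S : F →L[𝕜] E} (hTS : Function.RightInverse S T) :
    ‖L‖ ≤ ‖L.comp T‖ * ‖S‖ := by
  have hL : L = (L.comp T).comp S := by ext u; simp [hTS u]
  calc ‖L‖ = ‖(L.comp T).comp S‖ := congrArg norm hL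
    _ ≤ ‖L.comp T‖ * ‖S‖ := opNorm_comp_le _ _

theorem differentiable_mvPolynomial_eval_snoc {d : ℕ} (p : MvPolynomial (Fin (d + 1)) ℝ) :
    Differentiable ℝ (fun z : EuclideanSpace ℝ (Fin d) × ℝ =>
      MvPolynomial.eval (Fin.snoc (fun i => z.1 i) z.2) p) := by
  have hcoord : ∀ i, AnalyticOnNhd ℝ (fun z : EuclideanSpace ℝ (Fin d) × ℝ =>
      (Fin.snoc (fun i => z.1 i) z.2 : Fin (d + 1) → ℝ) i) Set.univ := by
    intro i
    induction i using Fin.lastCases with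
    | last => simpa using analyticOnNhd_snd
    | cast i =>
      simp only [Fin.snoc_castSucc]
      exact ((EuclideanSpace.proj i).comp (fst ℝ _ ℝ)).analyticOnNhd Set.univ
  exact fun z => (AnalyticAt.aeval_mvPolynomial (fun i => hcoord i z trivial) p).differentiableAt

noncomputable section ParabolicRescaling

variable {E : Type*} [NormedAddCommGroup E] [NormedSpace ℝ E]

def parabolicRescaling (H : E →L[ℝ] E) (v : E) (ρ : ℝ) : E × ℝ →L[ℝ] E × ℝ :=
  (ρ⁻¹ • H.comp (fst ℝ E ℝ) - (ρ⁻¹ ^ 2 • snd ℝ E ℝ).smulRight v).prod (ρ⁻¹ ^ 2 • snd ℝ E ℝ)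

@[simp]
theorem parabolicRescaling_apply (H : E →L[ℝ] E) (v : E) (ρ : ℝ) (w : E × ℝ) :
    parabolicRescaling H v ρ w = (ρ⁻¹ • H w.1 - (ρ⁻¹ ^ 2 * w.2) • v, ρ⁻¹ ^ 2 * w.2) := by
  simp [parabolicRescaling]

def parabolicRescalingInv (G : E →L[ℝ] E) (v : E) (ρ : ℝ) : E × ℝ →L[ℝ] E × ℝ :=
  (ρ • G.comp (fst ℝ E ℝ + (snd ℝ E ℝ).smulRight v)).prod (ρ ^ 2 • snd ℝ E ℝ)

@[simp]
theorem parabolicRescalingInv_apply (G : E →L[ℝ] E) (v : E) (ρ : ℝ) (u : E × ℝ) :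
    parabolicRescalingInv G v ρ u = (ρ • G (u.1 + u.2 • v), ρ ^ 2 * u.2) := by
  simp [parabolicRescalingInv]

theorem rightInverse_parabolicRescalingInv (H : E ≃L[ℝ] E) (v : E) {ρ : ℝ} (hρ : ρ ≠ 0) :
    Function.RightInverse (parabolicRescalingInv (H.symm : E →L[ℝ] E) v ρ)
      (parabolicRescaling (H : E →L[ℝ] E) v ρ) := by
  intro u
  have ht : ρ⁻¹ ^ 2 * (ρ ^ 2 * u.2) = u.2 := by field_simp
  simp only [parabolicRescalingInv_apply, parabolicRescaling_apply, ContinuousLinearEquiv.coe_coe,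
    map_smul, H.apply_symm_apply, smul_smul, inv_mul_cancel₀ hρ, one_smul, ht]
  simp

theorem norm_parabolicRescalingInv_le {G : E →L[ℝ] E} {v : E} {C ρ : ℝ} (hG : ‖G‖ ≤ C)
    (hv : ‖v‖ ≤ C) (hρ : 0 < ρ) (hρ1 : ρ ≤ 1) :
    ‖parabolicRescalingInv G v ρ‖ ≤ ρ * (C + 1) ^ 2 := by
  have hC : 0 ≤ C := (norm_nonneg v).trans hv
  refine opNorm_le_bound _ (by positivity) fun u => ?_
  have h1 : ‖u.1‖ ≤ ‖u‖ := norm_fst_le u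
  have h2 : ‖u.2‖ ≤ ‖u‖ := norm_snd_le u
  rw [parabolicRescalingInv_apply, Prod.norm_def]
  refine max_le ?_ ?_
  · calc ‖ρ • G (u.1 + u.2 • v)‖ ≤ ρ * (C * (‖u.1‖ + ‖u.2‖ * C)) := by
          rw [norm_smul, Real.norm_of_nonneg hρ.le]
          gcongr
          calc ‖G (u.1 + u.2 • v)‖ ≤ ‖G‖ * ‖u.1 + u.2 • v‖ := G.le_opNorm _
            _ ≤ C * (‖u.1‖ + ‖u.2‖ * C) := by
              gcongr
              exact (norm_add_le _ _).trans (by rw [norm_smul]; gcongr)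
      _ ≤ ρ * (C * (‖u‖ + ‖u‖ * C)) := by gcongr
      _ ≤ ρ * (C + 1) ^ 2 * ‖u‖ := by
          have := mul_nonneg hρ.le (norm_nonneg u)
          nlinarith
  · calc ‖ρ ^ 2 * u.2‖ = ρ ^ 2 * ‖u.2‖ := by rw [norm_mul, norm_pow, Real.norm_of_nonneg hρ.le]
      _ ≤ ρ * ‖u‖ := by gcongr; nlinarith
      _ ≤ ρ * (C + 1) ^ 2 * ‖u‖ := by
          have := mul_nonneg hρ.le (norm_nonneg u)
          nlinarith [mul_nonneg this hC, mul_nonneg this (sq_nonneg C)]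

theorem norm_le_norm_comp_parabolicRescaling {F : Type*} [NormedAddCommGroup F] [NormedSpace ℝ F]
    (L : E × ℝ →L[ℝ] F) {H : E ≃L[ℝ] E} {v : E} {C ρ : ℝ} (hH : ‖(H.symm : E →L[ℝ] E)‖ ≤ C)
    (hv : ‖v‖ ≤ C) (hρ : 0 < ρ) (hρ1 : ρ ≤ 1) :
    ‖L‖ ≤ ρ * (C + 1) ^ 2 * ‖L.comp (parabolicRescaling (H : E →L[ℝ] E) v ρ)‖ := by
  calc ‖L‖ ≤ ‖L.comp (parabolicRescaling (H : E →L[ℝ] E) v ρ)‖ *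
        ‖parabolicRescalingInv (H.symm : E →L[ℝ] E) v ρ‖ :=
        L.norm_le_norm_comp_mul_of_rightInverse (rightInverse_parabolicRescalingInv H v hρ.ne')
    _ ≤ _ := by
        rw [mul_comm]
        gcongr
        exact norm_parabolicRescalingInv_le hH hv hρ hρ1

theorem parabolicRescaling_apply_normal (H : E ≃L[ℝ] E) (g v : E) {ρ : ℝ} :
    parabolicRescaling (H : E →L[ℝ] E) v ρ (-(ρ⁻¹ • H.symm (g - v)), 1) =
      ρ⁻¹ ^ 2 • ((-g, 1) : E × ℝ) := by
  ext
  · simp only [parabolicRescaling_apply, ContinuousLinearEquiv.coe_coe, map_neg, map_smul,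
      H.apply_symm_apply, smul_smul, Prod.smul_fst, smul_neg, smul_sub, mul_one, sq]
    abel
  · simp

end ParabolicRescaling

theorem statement_13_general (d : ℕ) (C₁ : ℝ) (hC₁ : 0 < C₁) :
    ∃ c : ℝ, 0 < c ∧ ∃ C : ℝ, 0 < C ∧
      ∀ (P : EuclideanSpace ℝ (Fin d) × ℝ → ℝ),
      (∃ p : MvPolynomial (Fin (d + 1)) ℝ, ∀ z : EuclideanSpace ℝ (Fin d) × ℝ,
          P z = MvPolynomial.eval (Fin.snoc (fun i => z.1 i) z.2) p) →
      ∀ (H : EuclideanSpace ℝ (Fin d) ≃L[ℝ] EuclideanSpace ℝ (Fin d)),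
        (∀ u w : EuclideanSpace ℝ (Fin d), ⟪H u, w⟫ = ⟪u, H w⟫) →
        ‖(H : EuclideanSpace ℝ (Fin d) →L[ℝ] EuclideanSpace ℝ (Fin d))‖ ≤ C₁ →
        ‖(H.symm : EuclideanSpace ℝ (Fin d) →L[ℝ] EuclideanSpace ℝ (Fin d))‖ ≤ C₁ →
      ∀ (v : EuclideanSpace ℝ (Fin d)), ‖v‖ ≤ C₁ →
      ∀ (ρ : ℝ), 0 < ρ → ρ ≤ 1 →
      ∀ (φ : EuclideanSpace ℝ (Fin d) → ℝ), Differentiable ℝ φ →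
      ∀ z : EuclideanSpace ℝ (Fin d) × ℝ,
        -- |(Q_{x'},Q_{t'})| ≥ c ρ^{-1} |(P_x,P_t)|
        c * ρ⁻¹ * ‖fderiv ℝ P (ρ⁻¹ • H z.1 - (ρ⁻¹ ^ 2 * z.2) • v, ρ⁻¹ ^ 2 * z.2)‖
          ≤ ‖fderiv ℝ (fun w : EuclideanSpace ℝ (Fin d) × ℝ =>
              P (ρ⁻¹ • H w.1 - (ρ⁻¹ ^ 2 * w.2) • v, ρ⁻¹ ^ 2 * w.2)) z‖ ∧
        -- the angle-quantity comparison
        (fderiv ℝ P (ρ⁻¹ • H z.1 - (ρ⁻¹ ^ 2 * z.2) • v, ρ⁻¹ ^ 2 * z.2) ≠ 0 →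
          ∀ ξ : EuclideanSpace ℝ (Fin d),
            |fderiv ℝ (fun w : EuclideanSpace ℝ (Fin d) × ℝ =>
                P (ρ⁻¹ • H w.1 - (ρ⁻¹ ^ 2 * w.2) • v, ρ⁻¹ ^ 2 * w.2)) z
              (-(ρ⁻¹ • H.symm (gradient φ ξ - v)), 1)| /
            ‖fderiv ℝ (fun w : EuclideanSpace ℝ (Fin d) × ℝ =>
                P (ρ⁻¹ • H w.1 - (ρ⁻¹ ^ 2 * w.2) • v, ρ⁻¹ ^ 2 * w.2)) z‖
            ≤ C * ρ⁻¹ *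
              (|fderiv ℝ P (ρ⁻¹ • H z.1 - (ρ⁻¹ ^ 2 * z.2) • v, ρ⁻¹ ^ 2 * z.2)
                  (-(gradient φ ξ), 1)| /
               ‖fderiv ℝ P (ρ⁻¹ • H z.1 - (ρ⁻¹ ^ 2 * z.2) • v, ρ⁻¹ ^ 2 * z.2)‖)) := by
  refine ⟨((C₁ + 1) ^ 2)⁻¹, by positivity, (C₁ + 1) ^ 2, by positivity, ?_⟩
  rintro P ⟨p, hp⟩ H - - hHinv v hv ρ hρ hρ1 φ - z
  set T := parabolicRescaling (H : EuclideanSpace ℝ (Fin d) →L[ℝ] _) v ρ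
  have hPdiff : Differentiable ℝ P := by
    simpa only [← funext hp] using differentiable_mvPolynomial_eval_snoc p
  have hfun : (fun w : EuclideanSpace ℝ (Fin d) × ℝ =>
      P (ρ⁻¹ • H w.1 - (ρ⁻¹ ^ 2 * w.2) • v, ρ⁻¹ ^ 2 * w.2)) = P ∘ T := by
    funext w; simp [T]
  have hTz : (ρ⁻¹ • H z.1 - (ρ⁻¹ ^ 2 * z.2) • v, ρ⁻¹ ^ 2 * z.2) = T z := by simp [T]
  rw [hfun, hTz, ((hPdiff (T z)).hasFDerivAt.comp z T.hasFDerivAt).fderiv]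
  set L := fderiv ℝ P (T z)
  have hlower : ((C₁ + 1) ^ 2)⁻¹ * ρ⁻¹ * ‖L‖ ≤ ‖L.comp T‖ := by
    have := norm_le_norm_comp_parabolicRescaling L hHinv hv hρ hρ1
    rw [← mul_inv, ← le_div_iff₀' (by positivity), div_inv_eq_mul]
    linarith
  refine ⟨hlower, fun hL ξ => ?_⟩
  rw [comp_apply, parabolicRescaling_apply_normal, map_smul, smul_eq_mul, abs_mul,
    abs_of_pos (by positivity : (0 : ℝ) < ρ⁻¹ ^ 2)]
  calc ρ⁻¹ ^ 2 * |L (-gradient φ ξ, 1)| / ‖L.comp T‖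
      ≤ ρ⁻¹ ^ 2 * |L (-gradient φ ξ, 1)| / (((C₁ + 1) ^ 2)⁻¹ * ρ⁻¹ * ‖L‖) := by
        have := norm_pos_iff.mpr hL
        gcongr
    _ = (C₁ + 1) ^ 2 * ρ⁻¹ * (|L (-gradient φ ξ, 1)| / ‖L‖) := by field_simp

/-- Quantitative bound for the rescaled gradients: under the bounds
`‖H‖, ‖H⁻¹‖ ≤ C₁`, `|v| ≤ C₁`, one has `|(Q_{x'},Q_{t'})| ≥ c ρ^{-1} |(P_x,P_t)|`, and hence
the rescaled tangency quantity is at most `C ρ^{-1}` times the original one. -/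
theorem statement_13 (d : ℕ) (hd : 0 < d) (C₁ : ℝ) (hC₁ : 0 < C₁) :
    ∃ c : ℝ, 0 < c ∧ ∃ C : ℝ, 0 < C ∧
      ∀ (P : EuclideanSpace ℝ (Fin d) × ℝ → ℝ),
      (∃ p : MvPolynomial (Fin (d + 1)) ℝ, ∀ z : EuclideanSpace ℝ (Fin d) × ℝ,
          P z = MvPolynomial.eval (Fin.snoc (fun i => z.1 i) z.2) p) →
      ∀ (H : EuclideanSpace ℝ (Fin d) ≃L[ℝ] EuclideanSpace ℝ (Fin d)),
        (∀ u w : EuclideanSpace ℝ (Fin d), ⟪H u, w⟫ = ⟪u, H w⟫) →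
        ‖(H : EuclideanSpace ℝ (Fin d) →L[ℝ] EuclideanSpace ℝ (Fin d))‖ ≤ C₁ →
        ‖(H.symm : EuclideanSpace ℝ (Fin d) →L[ℝ] EuclideanSpace ℝ (Fin d))‖ ≤ C₁ →
      ∀ (v : EuclideanSpace ℝ (Fin d)), ‖v‖ ≤ C₁ →
      ∀ (ρ : ℝ), 0 < ρ → ρ ≤ 1 →
      ∀ (φ : EuclideanSpace ℝ (Fin d) → ℝ), Differentiable ℝ φ →
      ∀ z : EuclideanSpace ℝ (Fin d) × ℝ,
        -- |(Q_{x'},Q_{t'})| ≥ c ρ^{-1} |(P_x,P_t)|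
        c * ρ⁻¹ * ‖fderiv ℝ P (ρ⁻¹ • H z.1 - (ρ⁻¹ ^ 2 * z.2) • v, ρ⁻¹ ^ 2 * z.2)‖
          ≤ ‖fderiv ℝ (fun w : EuclideanSpace ℝ (Fin d) × ℝ =>
              P (ρ⁻¹ • H w.1 - (ρ⁻¹ ^ 2 * w.2) • v, ρ⁻¹ ^ 2 * w.2)) z‖ ∧
        -- the angle-quantity comparison
        (fderiv ℝ P (ρ⁻¹ • H z.1 - (ρ⁻¹ ^ 2 * z.2) • v, ρ⁻¹ ^ 2 * z.2) ≠ 0 →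
          ∀ ξ : EuclideanSpace ℝ (Fin d),
            |fderiv ℝ (fun w : EuclideanSpace ℝ (Fin d) × ℝ =>
                P (ρ⁻¹ • H w.1 - (ρ⁻¹ ^ 2 * w.2) • v, ρ⁻¹ ^ 2 * w.2)) z
              (-(ρ⁻¹ • H.symm (gradient φ ξ - v)), 1)| /
            ‖fderiv ℝ (fun w : EuclideanSpace ℝ (Fin d) × ℝ =>
                P (ρ⁻¹ • H w.1 - (ρ⁻¹ ^ 2 * w.2) • v, ρ⁻¹ ^ 2 * w.2)) z‖
            ≤ C * ρ⁻¹ *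
              (|fderiv ℝ P (ρ⁻¹ • H z.1 - (ρ⁻¹ ^ 2 * z.2) • v, ρ⁻¹ ^ 2 * z.2)
                  (-(gradient φ ξ), 1)| /
               ‖fderiv ℝ P (ρ⁻¹ • H z.1 - (ρ⁻¹ ^ 2 * z.2) • v, ρ⁻¹ ^ 2 * z.2)‖)) :=
  statement_13_general d C₁ hC₁
end
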